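/- The coproduct of the Hopf algebra of rooted trees admits the combinatorial formula Δ(f) = Σ_{W ∈ I(f)} P^W(f) ⊗ R^W(f), where the sum runs over antichains W of nodes of the forest f, P^W(f) is the forest of subtrees rooted at nodes of W, and R^W(f) is the forest on the remaining nodes. -/

import Mathlib

/-- Planar rooted trees. -/
inductive RTree : Type where
  | node : List RTree → RTree

mutual
/-- All admissible cuts of a tree, i.e. all antichains `W` of nodes of `t`:
each cut yields the pair `(P^W t, R^W t)` of the pruned forest (the subtrees
rooted at the nodes in `W`) and the remaining forest. -/
def cutsT : RTree → Multiset (List RTree × List RTree)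
  | .node l => ([RTree.node l], []) ::ₘ
      (cutsF l).map (fun pr => (pr.1, [RTree.node pr.2]))
/-- All admissible cuts of a forest, with their pruned and remaining parts. -/
def cutsF : List RTree → Multiset (List RTree × List RTree)
  | [] => {([], [])}
  | t :: ts => (cutsT t).bind
      (fun pr => (cutsF ts).map (fun qs => (pr.1 ++ qs.1, pr.2 ++ qs.2)))
end

open TensorProduct

variable (K : Type) [Field K]

/-- The algebra of rooted trees: the monoid algebra on the free monoid of
rooted trees (with basis the rooted forests). -/
abbrev HTrees := MonoidAlgebra K (FreeMonoid RTree)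

/-- The basis element of `HTrees` corresponding to a forest. -/
noncomputable def forestBasis (f : List RTree) : HTrees K :=
  MonoidAlgebra.single (FreeMonoid.ofList f) 1

/-- The grafting operator `B₊`. -/
noncomputable def Bplus : HTrees K →ₗ[K] HTrees K :=
  MonoidAlgebra.mapDomainLinearMap K K
    (fun f : FreeMonoid RTree => FreeMonoid.of (RTree.node (FreeMonoid.toList f)))

/-!
Both sides are multiplicative in the forest: `Δ` is an algebra map, and a cut of `t :: ts` is
a cut of `t` next to a cut of `ts`, so the cut sums multiply. For a tree `B₊ f`, the cuts are
the full cut, contributing `B₊ f ⊗ 1`, and the cuts of `f` with the remaining forest grafted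
back under the root, contributing `(id ⊗ B₊)(Σ_W P^W f ⊗ R^W f)`. This is the defining
recursion of `Δ`, so nested induction on trees and forests gives the formula.
-/

lemma forestBasis_nil : forestBasis K [] = 1 := rfl

lemma forestBasis_append (f g : List RTree) :
    forestBasis K (f ++ g) = forestBasis K f * forestBasis K g := by
  simp [forestBasis, MonoidAlgebra.single_mul_single]

lemma Bplus_forestBasis (f : List RTree) :
    Bplus K (forestBasis K f) = forestBasis K [RTree.node f] := by
  rw [Bplus, forestBasis, MonoidAlgebra.mapDomainLinearMap_single]
  rfl

noncomputable def cutSum (c : Multiset (List RTree × List RTree)) : HTrees K ⊗[K] HTrees K :=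
  (c.map fun pr => forestBasis K pr.1 ⊗ₜ[K] forestBasis K pr.2).sum

lemma cutSum_bind_append (s t : Multiset (List RTree × List RTree)) :
    cutSum K (s.bind fun p => t.map fun q => (p.1 ++ q.1, p.2 ++ q.2)) =
      cutSum K s * cutSum K t := by
  simp only [cutSum, Multiset.map_bind, Multiset.sum_bind, Multiset.map_map,
    Function.comp_def, forestBasis_append, ← Algebra.TensorProduct.tmul_mul_tmul,
    Multiset.sum_map_mul_left, Multiset.sum_map_mul_right]

lemma cutSum_cutsF_nil : cutSum K (cutsF []) = 1 := by
  simp [cutSum, cutsF, forestBasis_nil, Algebra.TensorProduct.one_def]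

lemma cutSum_cutsF_cons (t : RTree) (ts : List RTree) :
    cutSum K (cutsF (t :: ts)) = cutSum K (cutsT t) * cutSum K (cutsF ts) :=
  cutSum_bind_append K _ _

lemma cutSum_cutsT_node (f : List RTree) :
    cutSum K (cutsT (RTree.node f)) =
      Bplus K (forestBasis K f) ⊗ₜ[K] (1 : HTrees K) +
        TensorProduct.map LinearMap.id (Bplus K) (cutSum K (cutsF f)) := by
  simp only [cutSum, cutsT, Multiset.map_cons, Multiset.sum_cons, Multiset.map_map,
    map_multiset_sum, Function.comp_def, TensorProduct.map_tmul, LinearMap.id_coe, id_eq,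
    Bplus_forestBasis, forestBasis_nil]

/-- the coproduct of the Hopf algebra of rooted trees (the algebra
morphism determined by `Δ ∘ B₊ = B₊ ⊗ 1 + (id ⊗ B₊) ∘ Δ`) is given on a forest
`f` by the combinatorial formula `Δ f = Σ_{W ∈ I(f)} P^W(f) ⊗ R^W(f)`, summing
over all antichains (admissible cuts) `W` of nodes of `f`. -/
theorem rooted_trees_coproduct_cuts
    (Δ : HTrees K →ₐ[K] (HTrees K ⊗[K] HTrees K))
    (hΔ : ∀ a : HTrees K,
      Δ (Bplus K a) = (Bplus K a) ⊗ₜ[K] (1 : HTrees K) +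
        (TensorProduct.map LinearMap.id (Bplus K)) (Δ a)) :
    ∀ f : List RTree,
      Δ (forestBasis K f) =
        ((cutsF f).map
          (fun pr => forestBasis K pr.1 ⊗ₜ[K] forestBasis K pr.2)).sum := by
  refine RTree.rec_1 (motive_1 := fun t => Δ (forestBasis K [t]) = cutSum K (cutsT t))
    (motive_2 := fun f => Δ (forestBasis K f) = cutSum K (cutsF f)) ?node ?nil ?cons
  case node =>
    intro f hf
    rw [← Bplus_forestBasis, hΔ, hf, cutSum_cutsT_node]
  case nil =>
    rw [forestBasis_nil, map_one, cutSum_cutsF_nil]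
  case cons =>
    intro t ts ht hts
    rw [cutSum_cutsF_cons, ← ht, ← hts, ← map_mul, ← forestBasis_append, List.singleton_append]
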